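/- Under Assumptions (A5) and (A6), there exists a constant μ > 0 independent of n and an N ∈ ℕ such that Δ_w(n)/Δ_u(n) ≤ μ for all n ≥ N. -/

import Mathlib

/-!
Let `S = ∑ k, p k * c k` be an entry of `E[A_w]`, where `c k ∈ {0, 1}` is the entry of the
`k`-th complete subgraph. Only `O(n ^ (m t - 2))` lists of type `t` contain a given pair of
vertices, and by (A5) each has probability `O(n ^ (-h t))`, so `S = O(∑ t, n ^ (m t - 2 - h t))`
tends to `0` uniformly in the entry. The corresponding entry `W` of `A_w` is a sum of pairwise
independent Bernoulli variables: it is integer valued and `E[W²] ≤ E W + (E W)²`, so the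
pointwise bound `min W 1 ≥ (3 W - W²) / 2` gives `E[min W 1] ≥ S - S² / 2 ≥ S / 2` once `S ≤ 1`.
Hence eventually `E[A_u] ≥ E[A_w] / 2` entrywise, and `Δ_w ≤ 2 Δ_u`.
-/

open MeasureTheory ProbabilityTheory Matrix Filter

/-- The spectral norm of a real square matrix. -/
noncomputable def specNorm {n : ℕ} (A : Matrix (Fin n) (Fin n) ℝ) : ℝ :=
  ‖Matrix.toEuclideanCLM (𝕜 := ℝ) A‖

/-- The `‖·‖_∞` norm of a matrix: maximum absolute row sum. -/
noncomputable def rowSumNorm {n : ℕ} (A : Matrix (Fin n) (Fin n) ℝ) : ℝ :=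
  ⨆ i, ∑ j, |A i j|

/-- The adjacency matrix of the complete graph on the vertices of the ordered list `k.2`. -/
def completeSub {T : Type} {m : T → ℕ} (n : ℕ)
    (k : Σ t : T, Fin (m t) ↪ Fin n) : Matrix (Fin n) (Fin n) ℝ :=
  fun i j => if i ≠ j ∧ (∃ a, k.2 a = i) ∧ (∃ b, k.2 b = j) then 1 else 0

open Finset Topology

lemma eq_indicator_one_of_zero_or_one {α : Type*} {f : α → ℝ} (hf : ∀ a, f a = 0 ∨ f a = 1) :
    f = {a | f a = 1}.indicator 1 := by
  funext a
  rcases hf a with h | h <;> simp [h]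

lemma mul_eq_zero_or_one {a b : ℝ} (ha : a = 0 ∨ a = 1) (hb : b = 0 ∨ b = 1) :
    a * b = 0 ∨ a * b = 1 := by
  rcases ha with rfl | rfl <;> simp [hb]

lemma three_mul_sub_sq_div_two_le_min_one (N : ℕ) :
    (3 * (N : ℝ) - N ^ 2) / 2 ≤ min (N : ℝ) 1 := by
  rcases N with _ | _ | N
  · norm_num
  · norm_num
  · rw [min_eq_right (by push_cast; linarith)]
    push_cast
    nlinarith [(N.cast_nonneg : (0 : ℝ) ≤ N)]

lemma exists_sum_eq_natCast_of_zero_or_one {ι : Type*} [Fintype ι] {a : ι → ℝ}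
    (h01 : ∀ k, a k = 0 ∨ a k = 1) : ∃ N : ℕ, ∑ k, a k = N := by
  classical
  refine ⟨#{k | a k = 1}, ?_⟩
  rw [natCast_card_filter]
  refine sum_congr rfl fun k _ => ?_
  rcases h01 k with h | h <;> simp [h]

section Bernoulli

variable {Ω : Type*} [MeasurableSpace Ω] {μ : Measure Ω} {f : Ω → ℝ} {ι : Type*}
  {y : ι → Ω → ℝ}

lemma integrable_of_zero_or_one [IsFiniteMeasure μ] (hf : Measurable f)
    (h01 : ∀ ω, f ω = 0 ∨ f ω = 1) : Integrable f μ := by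
  rw [eq_indicator_one_of_zero_or_one h01]
  exact (integrable_const 1).indicator (hf (measurableSet_singleton 1))

lemma integral_eq_measureReal_of_zero_or_one (hf : Measurable f)
    (h01 : ∀ ω, f ω = 0 ∨ f ω = 1) : ∫ ω, f ω ∂μ = μ.real {ω | f ω = 1} :=
  calc ∫ ω, f ω ∂μ = ∫ ω, {ω | f ω = 1}.indicator 1 ω ∂μ := by
        congr 1; exact eq_indicator_one_of_zero_or_one h01
    _ = μ.real {ω | f ω = 1} := integral_indicator_one (hf (measurableSet_singleton 1))

lemma integral_mul_le_of_indepFun [DecidableEq ι] (hmeas : ∀ k, Measurable (y k))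
    (h01 : ∀ k ω, y k ω = 0 ∨ y k ω = 1)
    (hind : Pairwise fun k k' => IndepFun (y k) (y k') μ) (k k' : ι) :
    ∫ ω, y k ω * y k' ω ∂μ ≤
      (∫ ω, y k ω ∂μ) * (∫ ω, y k' ω ∂μ) + if k = k' then ∫ ω, y k ω ∂μ else 0 := by
  by_cases hkk : k = k'
  · subst hkk
    have hsq : ∀ ω, y k ω * y k ω = y k ω := fun ω => by rcases h01 k ω with h | h <;> simp [h]
    simp only [hsq, if_true]
    nlinarith [sq_nonneg (∫ ω, y k ω ∂μ)]
  · rw [if_neg hkk, add_zero, (hind hkk).integral_fun_mul_eq_mul_integral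
      (hmeas k).aestronglyMeasurable (hmeas k').aestronglyMeasurable]

lemma integral_sq_sum_le [IsProbabilityMeasure μ] [Fintype ι] (hmeas : ∀ k, Measurable (y k))
    (h01 : ∀ k ω, y k ω = 0 ∨ y k ω = 1)
    (hind : Pairwise fun k k' => IndepFun (y k) (y k') μ) :
    ∫ ω, (∑ k, y k ω) ^ 2 ∂μ ≤ ∫ ω, ∑ k, y k ω ∂μ + (∫ ω, ∑ k, y k ω ∂μ) ^ 2 := by
  classical
  have hint : ∀ k, Integrable (y k) μ := fun k => integrable_of_zero_or_one (hmeas k) (h01 k)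
  have hint₂ : ∀ k k', Integrable (fun ω => y k ω * y k' ω) μ := fun k k' =>
    integrable_of_zero_or_one ((hmeas k).mul (hmeas k')) fun ω =>
      mul_eq_zero_or_one (h01 k ω) (h01 k' ω)
  simp_rw [sq, sum_mul_sum]
  rw [integral_finsetSum _ fun k _ => integrable_finsetSum _ fun k' _ => hint₂ k k',
    integral_finsetSum _ fun k _ => hint k, sum_mul_sum]
  calc ∑ k, ∫ ω, ∑ k', y k ω * y k' ω ∂μ
      = ∑ k, ∑ k', ∫ ω, y k ω * y k' ω ∂μ :=
        sum_congr rfl fun k _ => integral_finsetSum _ fun k' _ => hint₂ k k'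
    _ ≤ ∑ k, ∑ k', ((∫ ω, y k ω ∂μ) * (∫ ω, y k' ω ∂μ) +
          if k = k' then ∫ ω, y k ω ∂μ else 0) :=
        sum_le_sum fun k _ => sum_le_sum fun k' _ => integral_mul_le_of_indepFun hmeas h01 hind k k'
    _ = _ := by simp only [sum_add_distrib, sum_ite_eq, mem_univ, if_true]; ring

lemma integral_sum_sub_sq_div_two_le_integral_min [IsProbabilityMeasure μ] [Fintype ι]
    (hmeas : ∀ k, Measurable (y k))
    (h01 : ∀ k ω, y k ω = 0 ∨ y k ω = 1)
    (hind : Pairwise fun k k' => IndepFun (y k) (y k') μ) :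
    ∫ ω, ∑ k, y k ω ∂μ - (∫ ω, ∑ k, y k ω ∂μ) ^ 2 / 2 ≤ ∫ ω, min (∑ k, y k ω) 1 ∂μ := by
  have hint : Integrable (fun ω => ∑ k, y k ω) μ :=
    integrable_finsetSum _ fun k _ => integrable_of_zero_or_one (hmeas k) (h01 k)
  have hint₂ : Integrable (fun ω => (∑ k, y k ω) ^ 2) μ := by
    simp_rw [sq, sum_mul_sum]
    exact integrable_finsetSum _ fun k _ => integrable_finsetSum _ fun k' _ =>
      integrable_of_zero_or_one ((hmeas k).mul (hmeas k')) fun ω =>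
        mul_eq_zero_or_one (h01 k ω) (h01 k' ω)
  have hmin : ∀ ω, (3 * ∑ k, y k ω - (∑ k, y k ω) ^ 2) / 2 ≤ min (∑ k, y k ω) 1 := fun ω => by
    obtain ⟨N, hN⟩ := exists_sum_eq_natCast_of_zero_or_one (h01 · ω)
    rw [hN]
    exact three_mul_sub_sq_div_two_le_min_one N
  have hmono : ∫ ω, (3 * ∑ k, y k ω - (∑ k, y k ω) ^ 2) / 2 ∂μ ≤
      ∫ ω, min (∑ k, y k ω) 1 ∂μ :=
    integral_mono (((hint.const_mul 3).sub hint₂).div_const 2) (hint.inf (integrable_const 1)) hmin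
  have hlin : ∫ ω, (3 * ∑ k, y k ω - (∑ k, y k ω) ^ 2) / 2 ∂μ =
      (3 * ∫ ω, ∑ k, y k ω ∂μ - ∫ ω, (∑ k, y k ω) ^ 2 ∂μ) / 2 := by
    rw [integral_div, integral_sub (hint.const_mul 3) hint₂, integral_const_mul]
  linarith [integral_sq_sum_le hmeas h01 hind]

lemma abs_integral_sum_le_two_mul_abs_integral_min [IsProbabilityMeasure μ] [Fintype ι]
    (hmeas : ∀ k, Measurable (y k)) (h01 : ∀ k ω, y k ω = 0 ∨ y k ω = 1)
    (hind : Pairwise fun k k' => IndepFun (y k) (y k') μ) (hle : ∫ ω, ∑ k, y k ω ∂μ ≤ 1) :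
    |∫ ω, ∑ k, y k ω ∂μ| ≤ 2 * |∫ ω, min (∑ k, y k ω) 1 ∂μ| := by
  have hnonneg : 0 ≤ ∫ ω, ∑ k, y k ω ∂μ :=
    integral_nonneg fun ω => sum_nonneg fun k _ => by rcases h01 k ω with h | h <;> simp [h]
  rw [abs_of_nonneg hnonneg]
  nlinarith [integral_sum_sub_sq_div_two_le_integral_min hmeas h01 hind,
    le_abs_self (∫ ω, min (∑ k, y k ω) 1 ∂μ)]

lemma integral_sum_mul_const_of_zero_or_one [IsFiniteMeasure μ] [Fintype ι] {x : ι → Ω → ℝ}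
    (hmeas : ∀ k, Measurable (x k)) (h01 : ∀ k ω, x k ω = 0 ∨ x k ω = 1) (c : ι → ℝ) :
    ∫ ω, ∑ k, x k ω * c k ∂μ = ∑ k, μ.real {ω | x k ω = 1} * c k := by
  rw [integral_finsetSum _ fun k _ => (integrable_of_zero_or_one (hmeas k) (h01 k)).mul_const _]
  refine sum_congr rfl fun k _ => ?_
  rw [integral_mul_const, integral_eq_measureReal_of_zero_or_one (hmeas k) (h01 k)]

lemma abs_integral_sum_mul_le_two_mul_abs_integral_min [IsProbabilityMeasure μ] [Fintype ι]
    {x : ι → Ω → ℝ} (hmeas : ∀ k, Measurable (x k)) (h01 : ∀ k ω, x k ω = 0 ∨ x k ω = 1)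
    (hind : Pairwise fun k k' => IndepFun (x k) (x k') μ) {c : ι → ℝ}
    (hc : ∀ k, c k = 0 ∨ c k = 1) (hle : ∑ k, μ.real {ω | x k ω = 1} * c k ≤ 1) :
    |∫ ω, ∑ k, x k ω * c k ∂μ| ≤ 2 * |∫ ω, min (∑ k, x k ω * c k) 1 ∂μ| :=
  abs_integral_sum_le_two_mul_abs_integral_min (fun k => (hmeas k).mul_const (c k))
    (fun k ω => mul_eq_zero_or_one (h01 k ω) (hc k))
    (fun _ _ hkk => (hind hkk).comp (measurable_id.mul_const _) (measurable_id.mul_const _))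
    ((integral_sum_mul_const_of_zero_or_one hmeas h01 c).trans_le hle)

end Bernoulli

lemma card_embedding_apply_eq_apply_eq_le {M N : ℕ} {a b : Fin M} (hab : a ≠ b) (i j : Fin N) :
    #{L : Fin M ↪ Fin N | L a = i ∧ L b = j} ≤ N ^ (M - 2) := by
  classical
  set s : Finset (Fin M) := {a, b}ᶜ
  have hs : #s = M - 2 := by rw [card_compl, card_pair hab, Fintype.card_fin]
  calc #{L : Fin M ↪ Fin N | L a = i ∧ L b = j}
      ≤ #(univ : Finset (s → Fin N)) := by
        refine card_le_card_of_injOn (fun L c => L c) (fun _ _ => mem_coe.2 (mem_univ _)) ?_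
        intro L hL L' hL' hLL'
        replace hL := (mem_filter.1 (mem_coe.1 hL)).2
        replace hL' := (mem_filter.1 (mem_coe.1 hL')).2
        refine DFunLike.ext _ _ fun c => ?_
        by_cases hc : c ∈ s
        · exact congrFun hLL' ⟨c, hc⟩
        · simp only [s, mem_compl, mem_insert, mem_singleton, not_not] at hc
          rcases hc with rfl | rfl
          · rw [hL.1, hL'.1]
          · rw [hL.2, hL'.2]
    _ = N ^ (M - 2) := by simp [hs]

lemma card_embedding_mem_range_pair_le {M N : ℕ} {i j : Fin N} (hij : i ≠ j) :
    #{L : Fin M ↪ Fin N | (∃ a, L a = i) ∧ ∃ b, L b = j} ≤ M ^ 2 * N ^ (M - 2) := by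
  classical
  calc #{L : Fin M ↪ Fin N | (∃ a, L a = i) ∧ ∃ b, L b = j}
      ≤ #((univ : Finset (Fin M × Fin M)).biUnion
          fun q => {L : Fin M ↪ Fin N | L q.1 = i ∧ L q.2 = j}) := by
        refine card_le_card fun L hL => ?_
        obtain ⟨⟨a, ha⟩, b, hb⟩ := (mem_filter.1 hL).2
        exact mem_biUnion.2 ⟨(a, b), mem_univ _, mem_filter.2 ⟨mem_univ _, ha, hb⟩⟩
    _ ≤ ∑ q : Fin M × Fin M, #{L : Fin M ↪ Fin N | L q.1 = i ∧ L q.2 = j} := card_biUnion_le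
    _ ≤ ∑ _q : Fin M × Fin M, N ^ (M - 2) := by
        refine sum_le_sum fun q _ => ?_
        by_cases hq : q.1 = q.2
        · refine (card_eq_zero.2 (filter_eq_empty_iff.2 fun L _ hL => hij ?_)).trans_le
            (Nat.zero_le _)
          rw [← hL.1, ← hL.2, hq]
        · exact card_embedding_apply_eq_apply_eq_le hq i j
    _ = M ^ 2 * N ^ (M - 2) := by simp [sq]

lemma rowSumNorm_nonneg {n : ℕ} (A : Matrix (Fin n) (Fin n) ℝ) : 0 ≤ rowSumNorm A :=
  Real.iSup_nonneg fun _ => sum_nonneg fun _ _ => abs_nonneg _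

lemma rowSumNorm_le_mul_of_abs_le {n : ℕ} {A B : Matrix (Fin n) (Fin n) ℝ} {c : ℝ} (hc : 0 ≤ c)
    (h : ∀ i j, |A i j| ≤ c * |B i j|) : rowSumNorm A ≤ c * rowSumNorm B := by
  refine Real.iSup_le (fun i => ?_) (mul_nonneg hc (rowSumNorm_nonneg B))
  calc ∑ j, |A i j| ≤ c * ∑ j, |B i j| := by rw [mul_sum]; exact sum_le_sum fun j _ => h i j
    _ ≤ c * rowSumNorm B :=
        mul_le_mul_of_nonneg_left
          (le_ciSup (f := fun i => ∑ j, |B i j|) (Set.finite_range _).bddAbove i) hc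

lemma tendsto_sum_mul_rpow_natCast_of_neg {ι : Type*} [Fintype ι] (c e : ι → ℝ)
    (he : ∀ t, e t < 0) :
    Tendsto (fun n : ℕ => ∑ t, c t * (n : ℝ) ^ e t) atTop (𝓝 0) := by
  have h := tendsto_finsetSum univ fun t _ =>
    (tendsto_rpow_neg_atTop (neg_pos.2 (he t))).const_mul (c t)
  simp only [neg_neg, mul_zero, sum_const_zero] at h
  exact h.comp tendsto_natCast_atTop_atTop

lemma completeSub_apply_eq_zero_or_one {T : Type} {m : T → ℕ} {n : ℕ}
    (k : Σ t : T, Fin (m t) ↪ Fin n) (i j : Fin n) :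
    completeSub n k i j = 0 ∨ completeSub n k i j = 1 := by
  unfold completeSub
  split_ifs <;> simp

lemma sum_mul_completeSub_apply_le {T : Type} [Fintype T] {m : T → ℕ} (hm : ∀ t, 2 ≤ m t)
    {n : ℕ} {q : (Σ t : T, Fin (m t) ↪ Fin n) → ℝ} {u h : T → ℝ} (hu : ∀ t, 0 ≤ u t)
    (hq : ∀ k, q k ≤ u k.1 / (n : ℝ) ^ h k.1) (i j : Fin n) :
    ∑ k, q k * completeSub n k i j ≤ ∑ t, u t * m t ^ 2 * (n : ℝ) ^ ((m t : ℝ) - 2 - h t) := by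
  have hn : (0 : ℝ) < n := Nat.cast_pos.2 i.pos
  by_cases hij : i = j
  · simp only [hij, completeSub, ne_eq, not_true_eq_false, false_and, if_false, mul_zero,
      sum_const_zero]
    exact sum_nonneg fun t _ => by have := hu t; positivity
  rw [← univ_sigma_univ, sum_sigma]
  refine sum_le_sum fun t _ => ?_
  have hpow : (n : ℝ) ^ ((m t : ℝ) - 2 - h t) = (n : ℝ) ^ (m t - 2) / (n : ℝ) ^ h t := by
    rw [Real.rpow_sub hn, ← Real.rpow_natCast, Nat.cast_sub (hm t), Nat.cast_ofNat]
  calc ∑ L, q ⟨t, L⟩ * completeSub n ⟨t, L⟩ i j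
      ≤ ∑ L, u t / (n : ℝ) ^ h t * completeSub n ⟨t, L⟩ i j := by
        refine sum_le_sum fun L _ => mul_le_mul_of_nonneg_right (hq _) ?_
        rcases completeSub_apply_eq_zero_or_one ⟨t, L⟩ i j with h | h <;> simp [h]
    _ = u t / (n : ℝ) ^ h t * #{L : Fin (m t) ↪ Fin n | (∃ a, L a = i) ∧ ∃ b, L b = j} := by
        rw [← mul_sum]
        simp [completeSub, hij]
    _ ≤ u t / (n : ℝ) ^ h t * (m t ^ 2 * n ^ (m t - 2) : ℕ) := by
        gcongr
        · have := hu t; positivity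
        · exact card_embedding_mem_range_pair_le hij
    _ = u t * m t ^ 2 * (n : ℝ) ^ ((m t : ℝ) - 2 - h t) := by
        rw [hpow]; push_cast; ring

theorem deltaW_div_deltaU_bounded_general
    {T : Type} [Fintype T]
    (m : T → ℕ) (hm2 : ∀ t, 2 ≤ m t)
    -- the generating probabilities p_n(t,L)
    (p : (n : ℕ) → (Σ t : T, Fin (m t) ↪ Fin n) → ℝ)
    (hp : ∀ n k, p n k ∈ Set.Icc (0 : ℝ) 1)
    -- the probability spaces and the independent Bernoulli families x(t,L)
    {Ω : ℕ → Type} [∀ n, MeasurableSpace (Ω n)]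
    (μ : (n : ℕ) → Measure (Ω n)) [∀ n, IsProbabilityMeasure (μ n)]
    (x : (n : ℕ) → (Σ t : T, Fin (m t) ↪ Fin n) → Ω n → ℝ)
    (hxmeas : ∀ n k, Measurable (x n k))
    (hx01 : ∀ n k ω, x n k ω = 0 ∨ x n k ω = 1)
    (hxp : ∀ n k, μ n {ω | x n k ω = 1} = ENNReal.ofReal (p n k))
    (hindep : ∀ n, iIndepFun (x n) (μ n))
    -- the weighted adjacency matrix, its expectation, and Δ_w
    (Aw : (n : ℕ) → Ω n → Matrix (Fin n) (Fin n) ℝ)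
    (hAw : ∀ n ω, Aw n ω = ∑ k, x n k ω • completeSub n k)
    (EAw : (n : ℕ) → Matrix (Fin n) (Fin n) ℝ)
    (hEAw : ∀ n i j, EAw n i j = ∫ ω, Aw n ω i j ∂(μ n))
    (Δw : ℕ → ℝ) (hΔw : ∀ n, Δw n = rowSumNorm (EAw n))
    -- the unweighted adjacency matrix, its expectation, and Δ_u
    (Au : (n : ℕ) → Ω n → Matrix (Fin n) (Fin n) ℝ)
    (hAu : ∀ n ω i j, Au n ω i j = min (Aw n ω i j) 1)
    (EAu : (n : ℕ) → Matrix (Fin n) (Fin n) ℝ)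
    (hEAu : ∀ n i j, EAu n i j = ∫ ω, Au n ω i j ∂(μ n))
    (Δu : ℕ → ℝ) (hΔu : ∀ n, Δu n = rowSumNorm (EAu n))
    -- Assumption (A5)
    (h l u : T → ℝ)
    (hl : ∀ t, 0 < l t) (hlu : ∀ t, l t < u t)
    (hh1 : ∀ t, (m t : ℝ) - 2 < h t)
    (hA5 : ∀ n k, p n k = 0 ∨
      ∃ b ∈ Set.Icc (l k.1) (u k.1), p n k = b / (n : ℝ) ^ (h k.1))
    : ∃ (μ' : ℝ) (N : ℕ), 0 < μ' ∧ ∀ n : ℕ, N ≤ n → Δw n / Δu n ≤ μ' := by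
  have hu : ∀ t, 0 ≤ u t := fun t => ((hl t).trans (hlu t)).le
  have hpu : ∀ n k, p n k ≤ u k.1 / (n : ℝ) ^ h k.1 := fun n k => by
    rcases hA5 n k with hp0 | ⟨b, hb, hpb⟩
    · rw [hp0]; have := hu k.1; positivity
    · rw [hpb]; gcongr; exact hb.2
  obtain ⟨N, hN⟩ := eventually_atTop.1 <|
    (tendsto_sum_mul_rpow_natCast_of_neg (fun t => u t * m t ^ 2) (fun t => m t - 2 - h t)
      fun t => by linarith [hh1 t]).eventually_le_const one_pos
  refine ⟨2, N, two_pos, fun n hn => ?_⟩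
  rw [hΔw, hΔu]
  -- when `Δu n = 0`, also `Δw n = 0` and the quotient is `0 / 0 = 0`
  refine div_le_of_le_mul₀ (rowSumNorm_nonneg _) zero_le_two
    (rowSumNorm_le_mul_of_abs_le zero_le_two fun i j => ?_)
  have hAw_apply : ∀ ω, Aw n ω i j = ∑ k, x n k ω * completeSub n k i j := fun ω => by
    simp [hAw, Matrix.sum_apply]
  have hmean : ∀ k, (μ n).real {ω | x n k ω = 1} = p n k := fun k => by
    rw [measureReal_def, hxp, ENNReal.toReal_ofReal (hp n k).1]
  rw [hEAw, hEAu]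
  simp_rw [hAu, hAw_apply]
  refine abs_integral_sum_mul_le_two_mul_abs_integral_min (hxmeas n) (hx01 n)
    (fun _ _ => (hindep n).indepFun) (completeSub_apply_eq_zero_or_one · i j) ?_
  simp_rw [hmean]
  exact (sum_mul_completeSub_apply_le hm2 hu (hpu n) i j).trans (hN n hn)

/-- Under (A5) and (A6), there is a constant `μ' > 0` independent of `n`
such that `Δ_w(n)/Δ_u(n) ≤ μ'` for all sufficiently large `n`. -/
theorem deltaW_div_deltaU_bounded
    {T : Type} [Fintype T] [DecidableEq T] [Nonempty T]
    (m : T → ℕ) (hm2 : ∀ t, 2 ≤ m t)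
    -- the generating probabilities p_n(t,L)
    (p : (n : ℕ) → (Σ t : T, Fin (m t) ↪ Fin n) → ℝ)
    (hp : ∀ n k, p n k ∈ Set.Icc (0 : ℝ) 1)
    -- the probability spaces and the independent Bernoulli families x(t,L)
    {Ω : ℕ → Type} [∀ n, MeasurableSpace (Ω n)]
    (μ : (n : ℕ) → Measure (Ω n)) [∀ n, IsProbabilityMeasure (μ n)]
    (x : (n : ℕ) → (Σ t : T, Fin (m t) ↪ Fin n) → Ω n → ℝ)
    (hxmeas : ∀ n k, Measurable (x n k))
    (hx01 : ∀ n k ω, x n k ω = 0 ∨ x n k ω = 1)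
    (hxp : ∀ n k, μ n {ω | x n k ω = 1} = ENNReal.ofReal (p n k))
    (hindep : ∀ n, iIndepFun (x n) (μ n))
    -- the weighted adjacency matrix, its expectation, and Δ_w
    (Aw : (n : ℕ) → Ω n → Matrix (Fin n) (Fin n) ℝ)
    (hAw : ∀ n ω, Aw n ω = ∑ k, x n k ω • completeSub n k)
    (EAw : (n : ℕ) → Matrix (Fin n) (Fin n) ℝ)
    (hEAw : ∀ n i j, EAw n i j = ∫ ω, Aw n ω i j ∂(μ n))
    (Δw : ℕ → ℝ) (hΔw : ∀ n, Δw n = rowSumNorm (EAw n))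
    -- the unweighted adjacency matrix, its expectation, and Δ_u
    (Au : (n : ℕ) → Ω n → Matrix (Fin n) (Fin n) ℝ)
    (hAu : ∀ n ω i j, Au n ω i j = min (Aw n ω i j) 1)
    (EAu : (n : ℕ) → Matrix (Fin n) (Fin n) ℝ)
    (hEAu : ∀ n i j, EAu n i j = ∫ ω, Au n ω i j ∂(μ n))
    (Δu : ℕ → ℝ) (hΔu : ∀ n, Δu n = rowSumNorm (EAu n))
    -- Assumption (A5)
    (h l u : T → ℝ)
    (hl : ∀ t, 0 < l t) (hlu : ∀ t, l t < u t)
    (hh1 : ∀ t, (m t : ℝ) - 2 < h t) (hh2 : ∀ t, h t < (m t : ℝ) - 1)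
    (hA5 : ∀ n k, p n k = 0 ∨
      ∃ b ∈ Set.Icc (l k.1) (u k.1), p n k = b / (n : ℝ) ^ (h k.1))
    -- Assumption (A6)
    (ξ : T → ℝ) (hξ : ∀ t, ξ t ∈ Set.Ioo (0 : ℝ) 1)
    (hA6a : ∀ (n : ℕ) (t : T),
      ξ t * (Nat.card (Fin (m t) ↪ Fin n) : ℝ) ≤
        (Nat.card {L : Fin (m t) ↪ Fin n // 0 < p n ⟨t, L⟩} : ℝ))
    (hA6b : ∀ (n : ℕ) (t : T) (i j : Fin n),
      ξ t * (Nat.card {L : Fin (m t) ↪ Fin n // (∃ a, L a = i) ∧ (∃ b, L b = j)} : ℝ) ≤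
        (Nat.card {L : Fin (m t) ↪ Fin n //
          ((∃ a, L a = i) ∧ (∃ b, L b = j)) ∧ 0 < p n ⟨t, L⟩} : ℝ))
    : ∃ (μ' : ℝ) (N : ℕ), 0 < μ' ∧ ∀ n : ℕ, N ≤ n → Δw n / Δu n ≤ μ' :=
  deltaW_div_deltaU_bounded_general m hm2 p hp μ x hxmeas hx01 hxp hindep Aw hAw EAw hEAw Δw hΔw Au
    hAu EAu hEAu Δu hΔu h l u hl hlu hh1 hA5
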